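/- arXiv:0802.4363 — 2 statements merged into one kernel-verified Lean document; each statement's English description precedes it below -/
import Mathlib

section
/- For a two-sided stationary ergodic process on a finite alphabet of size α, the supremum over m of (log R_m)/m is integrable: E[ sup_{m ≥ 1} (log R_m)/m ] < ∞, where R_m is the recurrence time of the initial m-block. -/
/-!
With `a_m = log₂ R_m / m` one has `sup_m a_m ≤ α + ∑_m (a_m - α)⁺` pointwise. Each term is
controlled by the elementary bound `(log₂ n / m - K)⁺ ≤ 2 n / 2^(m K)` (from `log₂ y ≤ 2 y`), so by
Kac's identity `E (a_m - α)⁺ ≤ 2 (α / 2^α)^m`, a convergent geometric series since `α < 2^α`.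
-/

open MeasureTheory

lemma logb_two_le_two_mul {y : ℝ} (hy : 0 ≤ y) : Real.logb 2 y ≤ 2 * y := by
  have hlog2 : 1 / 2 < Real.log 2 := by linarith [Real.log_two_gt_d9]
  rw [Real.logb, div_le_iff₀ (by linarith)]
  rcases hy.eq_or_lt with rfl | hy
  · simp
  · nlinarith [Real.log_le_sub_one_of_pos hy]

lemma logb_div_sub_le {n : ℝ} (hn : 0 ≤ n) (m K : ℕ) :
    Real.logb 2 n / m - K ≤ 2 * (n / 2 ^ (m * K)) := by
  by_cases hx : Real.logb 2 n / m - K ≤ 0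
  · exact hx.trans (by positivity)
  have hn : n ≠ 0 := by rintro rfl; simp at hx
  have hm : (1 : ℝ) ≤ m := by
    have : m ≠ 0 := by rintro rfl; simp at hx
    exact_mod_cast Nat.one_le_iff_ne_zero.2 this
  calc Real.logb 2 n / m - K ≤ m * (Real.logb 2 n / m - K) :=
        le_mul_of_one_le_left (by linarith) hm
    _ = Real.logb 2 (n / 2 ^ (m * K)) := by
      rw [Real.logb_div hn (by positivity), Real.logb_pow, Real.logb_self_eq_one one_lt_two]
      field_simp
      push_cast
      ring
    _ ≤ 2 * (n / 2 ^ (m * K)) := logb_two_le_two_mul (by positivity)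

lemma iSup_ofReal_le_add_tsum_ofReal_sub (a : ℕ → ℝ) (b : ℝ) :
    ⨆ m, ENNReal.ofReal (a m) ≤ ENNReal.ofReal b + ∑' m, ENNReal.ofReal (a m - b) :=
  iSup_le fun m => calc
    ENNReal.ofReal (a m) = ENNReal.ofReal (b + (a m - b)) := by rw [add_sub_cancel]
    _ ≤ ENNReal.ofReal b + ENNReal.ofReal (a m - b) := ENNReal.ofReal_add_le
    _ ≤ ENNReal.ofReal b + ∑' m, ENNReal.ofReal (a m - b) := by
      gcongr
      exact ENNReal.le_tsum m

lemma lintegral_ofReal_logb_div_sub_le {Ω : Type*} [MeasurableSpace Ω] (μ : Measure Ω)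
    (N : Ω → ℕ) (m K : ℕ) :
    ∫⁻ ω, ENNReal.ofReal (Real.logb 2 (N ω) / m - K) ∂μ
      ≤ 2 * ((2 ^ K)⁻¹) ^ m * ∫⁻ ω, (N ω : ENNReal) ∂μ := by
  have hpt (ω : Ω) :
      ENNReal.ofReal (Real.logb 2 (N ω) / m - K) ≤ 2 * ((2 ^ K)⁻¹) ^ m * N ω := by
    refine (ENNReal.ofReal_le_ofReal (logb_div_sub_le (Nat.cast_nonneg _) m K)).trans_eq ?_
    rw [ENNReal.ofReal_mul zero_le_two, ENNReal.ofReal_div_of_pos (by positivity)]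
    simp [pow_mul, div_eq_mul_inv, ENNReal.inv_pow, mul_comm, mul_left_comm,
      pow_right_comm _ m K]
  calc ∫⁻ ω, ENNReal.ofReal (Real.logb 2 (N ω) / m - K) ∂μ
      ≤ ∫⁻ ω, 2 * ((2 ^ K)⁻¹) ^ m * N ω ∂μ := lintegral_mono hpt
    _ = 2 * ((2 ^ K)⁻¹) ^ m * ∫⁻ ω, (N ω : ENNReal) ∂μ :=
      lintegral_const_mul' _ _ (by finiteness)

theorem stmt_3_general {Ω : Type*} [MeasurableSpace Ω] (μ : Measure Ω) [IsProbabilityMeasure μ]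
    (α : ℕ) (R : ℕ → Ω → ℕ) (hR : ∀ m, Measurable (R m))
    (hKac : ∀ m, 1 ≤ m → ∫⁻ ω, (R m ω : ENNReal) ∂μ = (α : ENNReal) ^ m) :
    ∫⁻ ω, ⨆ m : ℕ, ENNReal.ofReal (Real.logb 2 (R (m + 1) ω) / (m + 1)) ∂μ < ⊤ := by
  set r : ENNReal := (2 ^ α)⁻¹ * α with hr_def
  have hr : r < 1 := by
    rw [hr_def, mul_comm, ← div_eq_mul_inv, ENNReal.div_lt_iff (by simp) (by simp), one_mul]
    exact_mod_cast Nat.lt_two_pow_self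
  have hterm (m : ℕ) :
      ∫⁻ ω, ENNReal.ofReal (Real.logb 2 (R (m + 1) ω) / (m + 1) - α) ∂μ ≤ 2 * r ^ (m + 1) := by
    have := lintegral_ofReal_logb_div_sub_le μ (R (m + 1)) (m + 1) α
    rwa [hKac _ (Nat.le_add_left 1 m), mul_assoc, ← mul_pow, Nat.cast_succ] at this
  calc ∫⁻ ω, ⨆ m : ℕ, ENNReal.ofReal (Real.logb 2 (R (m + 1) ω) / (m + 1)) ∂μ
      ≤ ∫⁻ ω, (ENNReal.ofReal α
          + ∑' m : ℕ, ENNReal.ofReal (Real.logb 2 (R (m + 1) ω) / (m + 1) - α)) ∂μ :=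
        lintegral_mono fun ω => iSup_ofReal_le_add_tsum_ofReal_sub _ _
    _ = ENNReal.ofReal α
          + ∑' m : ℕ, ∫⁻ ω, ENNReal.ofReal (Real.logb 2 (R (m + 1) ω) / (m + 1) - α) ∂μ := by
        rw [lintegral_add_left measurable_const, lintegral_const, measure_univ, mul_one,
          lintegral_tsum fun m => ?_]
        exact ((measurable_of_countable fun n : ℕ ↦
          ENNReal.ofReal (Real.logb 2 n / (m + 1) - α)).comp (hR (m + 1))).aemeasurable
    _ ≤ ENNReal.ofReal α + ∑' m : ℕ, 2 * r ^ (m + 1) := by gcongr with m; exact hterm m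
    _ < ⊤ := by
        simp_rw [ENNReal.tsum_mul_left, pow_succ, ENNReal.tsum_mul_right]
        have : ∑' m : ℕ, r ^ m < ⊤ := tsum_geometric_lt_top.2 hr
        finiteness

/-- Integrability of the supremum of the normalized log-recurrence times:
`E[ sup_{m ≥ 1} (log R_m)/m ] < ∞` for a process on an alphabet of size `α ≥ 2`,
given Kac's identity `E(R_m) = α^m`. -/
theorem stmt_3 {Ω : Type*} [MeasurableSpace Ω] (μ : Measure Ω) [IsProbabilityMeasure μ]
    (α : ℕ) (hα : 2 ≤ α) (R : ℕ → Ω → ℕ) (hR : ∀ m, Measurable (R m))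
    (hR1 : ∀ m ω, 1 ≤ R m ω)
    (hKac : ∀ m, 1 ≤ m → ∫⁻ ω, (R m ω : ENNReal) ∂μ = (α : ENNReal) ^ m) :
    ∫⁻ ω, ⨆ m : ℕ, ENNReal.ofReal (Real.logb 2 (R (m + 1) ω) / (m + 1)) ∂μ < ⊤ :=
  stmt_3_general μ α R hR hKac
end

section
/- Entropy rate of a binary renewal process: if X is the stationary binary process whose interarrival times (gaps between successive 1s) are i.i.d. with distribution P = (p_j; j ≥ 1) having finite mean E(Y_1) = Σ_j j·p_j < ∞, then the entropy rate of X equals λ H(P), where λ = 1/E(Y_1) and H(P) = −Σ_j p_j log p_j. -/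
/-!
Stationarity and the renewal identity determine every cylinder probability: a block whose `1`s
sit at `a = t₀ < ⋯ < t_k = d` has probability `λ S(a) ∏ p(t_{i+1} - t_i) S(n - 1 - d)`, where
`λ = 1 / E(Y)` and `S(b) = P(Y > b)`, while the all-zero block has probability
`1 - λ ∑_{b<n} S(b)`. Expanding `-P log P`, the three kinds of factors are averaged against the
probabilities of "first `1` at `a`", "consecutive `1`s at `t < u`" and "last `1` at `d`", which
stationarity reduces to `λ S(a)`, `λ p(u - t)` and `λ S(n - 1 - d)`. Hence
`H(X_1^n) = O(1) + ∑_{m<n} u_m` with `u_m → λ H(P)` (as `S(m) → 0`), and Cesàro averaging gives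
the entropy rate.
-/

open MeasureTheory Filter
open scoped Topology

/-- Joint (base-2) entropy `H(X_1^n)` of a binary process with law `μ`. -/
noncomputable def blockEntropyB (μ : Measure (ℕ → Bool)) (n : ℕ) : ℝ :=
  -∑ s : Fin n → Bool,
    (μ {ω | ∀ i : Fin n, ω i = s i}).toReal *
      Real.logb 2 (μ {ω | ∀ i : Fin n, ω i = s i}).toReal

open Finset Real

namespace BinaryRenewal

theorem negMulLog_le_two_mul_sqrt {x : ℝ} (hx : 0 ≤ x) : negMulLog x ≤ 2 * √x := by
  have h := negMulLog_le_one_sub_self (sqrt_nonneg x)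
  calc negMulLog x = negMulLog (√x * √x) := by rw [mul_self_sqrt hx]
    _ = 2 * √x * negMulLog √x := by rw [negMulLog_mul]; ring
    _ ≤ 2 * √x * 1 := by gcongr; linarith [sqrt_nonneg x]
    _ = 2 * √x := mul_one _

/-- Split at `x = exp (-j)`: below it `negMulLog x ≤ 2 √x`, above it `-log x < j`. -/
theorem negMulLog_le_mul_add_exp {x : ℝ} (hx : 0 ≤ x) (j : ℕ) :
    negMulLog x ≤ j * x + 2 * exp (-1 / 2) ^ j := by
  have hexp : exp (-1 / 2) ^ j = √(exp (-j)) := by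
    rw [← exp_nat_mul, ← exp_half]; ring_nf
  rcases le_or_gt x (exp (-j)) with hsmall | hlarge
  · have := negMulLog_le_two_mul_sqrt hx
    have := sqrt_le_sqrt hsmall
    nlinarith [mul_nonneg (Nat.cast_nonneg j) hx]
  · have hpos : 0 < x := (exp_pos _).trans hlarge
    have hlog : -(j : ℝ) < log x := (lt_log_iff_exp_lt hpos).2 hlarge
    have : negMulLog x ≤ j * x := by
      rw [negMulLog, neg_mul]; nlinarith
    have : 0 ≤ exp (-1 / 2) ^ j := by positivity
    linarith

theorem summable_negMulLog_of_summable_mul {p : ℕ → ℝ} (hp0 : ∀ j, 0 ≤ p j)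
    (hp1 : ∀ j, p j ≤ 1) (hmean : Summable fun j : ℕ => (j : ℝ) * p j) :
    Summable fun j => negMulLog (p j) :=
  Summable.of_nonneg_of_le (fun j => negMulLog_nonneg (hp0 j) (hp1 j))
    (fun j => negMulLog_le_mul_add_exp (hp0 j) j)
    (hmean.add ((summable_geometric_of_lt_one (exp_pos _).le
      (exp_lt_one_iff.2 (by norm_num))).mul_left 2))

theorem tendsto_div_of_eq_add_sum {a b u : ℕ → ℝ} {C L : ℝ} (hb : ∀ n, |b n| ≤ C)
    (hu : Tendsto u atTop (𝓝 L)) (hab : ∀ n, a n = b n + ∑ m ∈ range n, u m) :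
    Tendsto (fun n => a n / n) atTop (𝓝 L) := by
  have hb' : Tendsto (fun n : ℕ => b n / n) atTop (𝓝 0) := by
    refine squeeze_zero_norm (fun n => ?_) (tendsto_const_div_atTop_nhds_zero_nat C)
    rw [norm_div, Real.norm_eq_abs, RCLike.norm_natCast]
    gcongr
    exact hb n
  simpa [hab, div_eq_inv_mul, mul_add] using hb'.add hu.cesaro

theorem tendsto_sum_range_sub {f : ℕ → ℝ} (hf : Summable f) (h0 : f 0 = 0) :
    Tendsto (fun m => ∑ t ∈ range m, f (m - t)) atTop (𝓝 (∑' j, f j)) := by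
  have h : ∀ m, ∑ t ∈ range m, f (m - t) = ∑ j ∈ range (m + 1), f j := fun m => by
    rw [sum_range_succ', h0, add_zero, ← sum_range_reflect]
    exact sum_congr rfl fun t ht => by rw [mem_range] at ht; congr 1; omega
  exact (hf.hasSum.tendsto_sum_nat.comp (tendsto_add_atTop_nat 1)).congr fun m => (h m).symm

variable {p : ℕ → ℝ}

def survival (p : ℕ → ℝ) (b : ℕ) : ℝ := 1 - ∑ j ∈ range (b + 1), p j

noncomputable def rate (p : ℕ → ℝ) : ℝ := (∑' j : ℕ, (j : ℝ) * p j)⁻¹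

theorem survival_zero (hp : p 0 = 0) : survival p 0 = 1 := by simp [survival, hp]

theorem survival_succ (b : ℕ) : survival p (b + 1) = survival p b - p (b + 1) := by
  simp only [survival, sum_range_succ _ (b + 1)]; ring

theorem tendsto_survival (hp : HasSum p 1) : Tendsto (survival p) atTop (𝓝 0) := by
  show Tendsto (fun b => 1 - ∑ j ∈ range (b + 1), p j) atTop _
  simpa using
    (tendsto_const_nhds (x := (1 : ℝ))).sub (hp.tendsto_sum_nat.comp (tendsto_add_atTop_nat 1))

theorem rate_nonneg (hp0 : ∀ j, 0 ≤ p j) : 0 ≤ rate p :=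
  inv_nonneg.2 (tsum_nonneg fun j => mul_nonneg j.cast_nonneg (hp0 j))

def ones (n : ℕ) (s : ℕ → Bool) : List ℕ := (List.range n).filter s

def gaps (l : List ℕ) : List ℕ := List.zipWith (fun a b => b - a) l l.tail

def cons (b : Bool) (s : ℕ → Bool) : ℕ → Bool
  | 0 => b
  | i + 1 => s i

@[simp] theorem cons_zero (b : Bool) (s : ℕ → Bool) : cons b s 0 = b := rfl
@[simp] theorem cons_succ (b : Bool) (s : ℕ → Bool) (i : ℕ) : cons b s (i + 1) = s i := rfl

def ofFin {n : ℕ} (s : Fin n → Bool) : ℕ → Bool :=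
  fun i => if h : i < n then s ⟨i, h⟩ else false

def IsGap (s : ℕ → Bool) (t u : ℕ) : Prop :=
  t < u ∧ s t = true ∧ s u = true ∧ ∀ v < u, t < v → s v = false

instance (s : ℕ → Bool) (t u : ℕ) : Decidable (IsGap s t u) :=
  inferInstanceAs (Decidable (_ ∧ _))

section Ones

variable {n : ℕ} {s : ℕ → Bool}

@[simp] theorem mem_ones {t : ℕ} : t ∈ ones n s ↔ t < n ∧ s t = true := by
  simp [ones]

theorem ones_succ (n : ℕ) (s : ℕ → Bool) :
    ones (n + 1) s = ones n s ++ if s n then [n] else [] := by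
  rw [ones, ones, List.range_succ, List.filter_append]
  cases h : s n <;> simp [h]

theorem ones_congr {s' : ℕ → Bool} (h : ∀ i < n, s i = s' i) : ones n s = ones n s' :=
  List.filter_congr fun i hi => h i (List.mem_range.1 hi)

theorem ones_cons (n : ℕ) (b : Bool) (s : ℕ → Bool) :
    ones (n + 1) (cons b s) = (if b then [0] else []) ++ (ones n s).map Nat.succ := by
  rw [ones, List.range_succ_eq_map, List.filter_cons, List.filter_map]
  cases b <;> rfl

theorem ones_eq_nil : ones n s = [] ↔ ∀ i < n, s i = false := by
  simp [ones, List.filter_eq_nil_iff]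

theorem head?_ones_eq_some {a : ℕ} :
    (ones n s).head? = some a ↔ a < n ∧ s a = true ∧ ∀ i < a, s i = false := by
  simp only [ones, List.head?_filter, List.find?_range_eq_some, List.mem_range,
    Bool.not_eq_eq_eq_not, Bool.not_true]
  tauto

theorem getLast?_ones_eq_some {d : ℕ} :
    (ones n s).getLast? = some d ↔ d < n ∧ s d = true ∧ ∀ i < n, d < i → s i = false := by
  induction n with
  | zero => simp [ones]
  | succ n ih =>
    rw [ones_succ]
    cases hsn : s n
    · simp only [Bool.false_eq_true, ↓reduceIte, List.append_nil, ih]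
      constructor
      · rintro ⟨hd, hsd, hi⟩
        refine ⟨by omega, hsd, fun i hi' hdi => ?_⟩
        rcases Nat.lt_succ_iff_lt_or_eq.1 hi' with hi' | rfl
        exacts [hi i hi' hdi, hsn]
      · rintro ⟨hd, hsd, hi⟩
        have : d ≠ n := by rintro rfl; simp [hsn] at hsd
        exact ⟨by omega, hsd, fun i hi' hdi => hi i (by omega) hdi⟩
    · simp only [↓reduceIte, List.getLast?_append, List.getLast?_singleton, Option.some_or,
        Option.some.injEq]
      constructor
      · rintro rfl
        exact ⟨by omega, hsn, fun i hi hdi => by omega⟩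
      · rintro ⟨hd, hsd, hi⟩
        by_contra hne
        simp [hi n (by omega) (by omega)] at hsn

theorem ones_pairwise (n : ℕ) (s : ℕ → Bool) : (ones n s).Pairwise (· < ·) :=
  List.pairwise_lt_range.sublist List.filter_sublist

theorem ones_ofFin_eq_nil {s : Fin n → Bool} : ones n (ofFin s) = [] ↔ s = fun _ => false := by
  rw [ones_eq_nil, funext_iff, Fin.forall_iff]
  exact forall₂_congr fun i hi => by simp [ofFin, hi]

theorem ones_succ_decide_eq_zero (m : ℕ) : ones (m + 1) (fun i => decide (i = 0)) = [0] := by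
  have h : (fun i => decide (i = 0)) = cons true fun _ => false := by
    funext i; cases i <;> rfl
  rw [h, ones_cons, ones_eq_nil.2 fun _ _ => rfl]
  rfl

theorem isGap_iff_getLast?_ones {t u : ℕ} (hu : s u = true) :
    IsGap s t u ↔ (ones u s).getLast? = some t := by
  rw [getLast?_ones_eq_some, IsGap]
  tauto

theorem head?_ones_eq_some_iff {a : ℕ} (ha : a < n) :
    (ones n s).head? = some a ↔ ∀ i < a + 1, s (0 + i) = decide (i = a) := by
  rw [head?_ones_eq_some]
  constructor
  · rintro ⟨-, hsa, hlt⟩ i hi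
    rcases Nat.lt_succ_iff_lt_or_eq.1 hi with hi | rfl
    · simp [hlt i hi, Nat.ne_of_lt hi]
    · simp [hsa]
  · intro h
    refine ⟨ha, by simpa using h a (by omega), fun i hi => ?_⟩
    simpa [Nat.ne_of_lt hi] using h i (by omega)

theorem getLast?_ones_eq_some_iff {d : ℕ} (hd : d < n) :
    (ones n s).getLast? = some d ↔ ∀ i < n - d, s (d + i) = decide (i = 0) := by
  rw [getLast?_ones_eq_some]
  constructor
  · rintro ⟨-, hsd, hgt⟩ i hi
    rcases Nat.eq_zero_or_pos i with rfl | hi0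
    · simpa using hsd
    · simp [hgt (d + i) (by omega) (by omega), Nat.ne_of_gt hi0]
  · intro h
    refine ⟨hd, by simpa using h 0 (by omega), fun i hi hdi => ?_⟩
    simpa [show d + (i - d) = i by omega, show i - d ≠ 0 by omega] using h (i - d) (by omega)

theorem isGap_iff {t u : ℕ} (htu : t < u) :
    IsGap s t u ↔ ∀ i < u - t + 1, s (t + i) = decide (i = 0 ∨ i = u - t) := by
  constructor
  · rintro ⟨-, hst, hsu, hbetween⟩ i hi
    rcases Nat.eq_zero_or_pos i with rfl | hi0
    · simpa using hst
    rcases Nat.lt_succ_iff_lt_or_eq.1 hi with hi | rfl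
    · simp [hbetween (t + i) (by omega) (by omega), Nat.ne_of_gt hi0, Nat.ne_of_lt hi]
    · simpa [show t + (u - t) = u by omega] using hsu
  · intro h
    have hsu := h (u - t) (by omega)
    rw [show t + (u - t) = u by omega] at hsu
    refine ⟨htu, by simpa using h 0 (by omega), by simpa using hsu, fun v hvu htv => ?_⟩
    simpa [show t + (v - t) = v by omega, show v - t ≠ 0 by omega, show v - t ≠ u - t by omega]
      using h (v - t) (by omega)

end Ones

section Gaps

@[simp] theorem gaps_nil : gaps [] = [] := rfl
@[simp] theorem gaps_singleton (a : ℕ) : gaps [a] = [] := rfl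
@[simp] theorem gaps_cons_cons (a b : ℕ) (l : List ℕ) :
    gaps (a :: b :: l) = (b - a) :: gaps (b :: l) := rfl

theorem length_gaps (l : List ℕ) : (gaps l).length = l.length - 1 := by
  simp [gaps]

@[simp] theorem gaps_map_succ (l : List ℕ) : gaps (l.map Nat.succ) = gaps l := by
  induction l with
  | nil => rfl
  | cons a l ih =>
    cases l with
    | nil => rfl
    | cons b l => simp_all

theorem gaps_append_singleton {l : List ℕ} {d : ℕ} (hd : l.getLast? = some d) (x : ℕ) :
    gaps (l ++ [x]) = gaps l ++ [x - d] := by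
  induction l with
  | nil => simp at hd
  | cons a l ih =>
    cases l with
    | nil => simp_all
    | cons b l => simp_all

theorem add_sum_getD_gaps {a : ℕ} {l : List ℕ} (hl : (a :: l).Pairwise (· ≤ ·)) {i : ℕ}
    (hi : i ≤ l.length) : a + ∑ k ∈ range i, (gaps (a :: l)).getD k 0 = (a :: l).getD i 0 := by
  induction l generalizing a i with
  | nil => simp_all
  | cons b l ih =>
    rw [List.pairwise_cons] at hl
    cases i with
    | zero => simp
    | succ i =>
      rw [sum_range_succ', gaps_cons_cons, List.getD_cons_succ]
      simp only [List.getD_cons_succ, List.getD_cons_zero]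
      have := ih hl.2 (i := i) (by simpa using hi)
      have := hl.1 b (by simp)
      omega

theorem pos_of_mem_gaps {l : List ℕ} (hl : l.Pairwise (· < ·)) {g : ℕ} (hg : g ∈ gaps l) :
    0 < g := by
  induction l with
  | nil => simp at hg
  | cons a l ih =>
    cases l with
    | nil => simp at hg
    | cons b l =>
      rw [List.pairwise_cons] at hl
      rcases List.mem_cons.1 hg with rfl | hg
      · exact Nat.sub_pos_of_lt (hl.1 b (by simp))
      · exact ih hl.2 hg

theorem sum_map_gaps_ones {M : Type*} [AddCommMonoid M] (f : ℕ → M) (n : ℕ) (s : ℕ → Bool) :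
    ((gaps (ones n s)).map f).sum =
      ∑ u ∈ range n, ∑ t ∈ range u, if IsGap s t u then f (u - t) else 0 := by
  induction n with
  | zero => simp [ones]
  | succ n ih =>
    rw [sum_range_succ, ← ih, ones_succ]
    cases hsn : s n
    · simp [IsGap, hsn]
    · simp only [↓reduceIte, isGap_iff_getLast?_ones hsn]
      cases hd : (ones n s).getLast? with
      | none => simp_all [List.getLast?_eq_none_iff]
      | some d =>
        have hdn : d < n := (getLast?_ones_eq_some.1 hd).1
        simp [gaps_append_singleton hd, hdn]

end Gaps

/-- The stationary probability that `X_0, …, X_{n-1}` agree with `s`: the first `1` sits at `a`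
with probability `rate p * survival p a`, consecutive `1`s contribute the gap probabilities, and
no renewal follows the last `1` at `d` within the remaining `n - 1 - d` steps. -/
noncomputable def cylinderProb (p : ℕ → ℝ) (n : ℕ) (s : ℕ → Bool) : ℝ :=
  match (ones n s).head?, (ones n s).getLast? with
  | some a, some d =>
    rate p * survival p a * ((gaps (ones n s)).map p).prod * survival p (n - 1 - d)
  | _, _ => 1 - rate p * ∑ b ∈ range n, survival p b

section CylinderProb

variable {n : ℕ} {s : ℕ → Bool}

theorem cylinderProb_of_ones_eq_nil (h : ones n s = []) :
    cylinderProb p n s = 1 - rate p * ∑ b ∈ range n, survival p b := by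
  simp [cylinderProb, h]

theorem cylinderProb_of_head?_of_getLast? {a d : ℕ} (ha : (ones n s).head? = some a)
    (hd : (ones n s).getLast? = some d) :
    cylinderProb p n s =
      rate p * survival p a * ((gaps (ones n s)).map p).prod * survival p (n - 1 - d) := by
  simp only [cylinderProb, ha, hd]

@[simp] theorem cylinderProb_zero (s : ℕ → Bool) : cylinderProb p 0 s = 1 :=
  (cylinderProb_of_ones_eq_nil rfl).trans (by simp)

theorem cylinderProb_eq_add_update (hp : p 0 = 0) (n : ℕ) (s : ℕ → Bool) :
    cylinderProb p n s =
      cylinderProb p (n + 1) (Function.update s n false) +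
        cylinderProb p (n + 1) (Function.update s n true) := by
  have hones : ∀ b, ones (n + 1) (Function.update s n b) = ones n s ++ if b then [n] else [] :=
    fun b => by
      rw [ones_succ, Function.update_self,
        ones_congr fun i hi => Function.update_of_ne (Nat.ne_of_lt hi) b s]
  have h0 := survival_zero hp
  cases hl : ones n s with
  | nil =>
    rw [cylinderProb_of_ones_eq_nil hl, cylinderProb_of_ones_eq_nil (by simp [hones, hl]),
      cylinderProb_of_head?_of_getLast? (a := n) (d := n) (by simp [hones, hl])
        (by simp [hones, hl])]
    simp only [sum_range_succ, hones, hl, ↓reduceIte, List.nil_append, gaps_singleton,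
      List.map_nil, List.prod_nil, mul_one, add_tsub_cancel_right, tsub_self, h0]
    ring
  | cons a l =>
    set d := (a :: l).getLast (List.cons_ne_nil a l)
    have hd : (ones n s).getLast? = some d := by rw [hl, List.getLast?_eq_some_getLast]
    have hdn : d < n := (getLast?_ones_eq_some.1 hd).1
    rw [cylinderProb_of_head?_of_getLast? (by rw [hl]; rfl) hd,
      cylinderProb_of_head?_of_getLast? (a := a) (d := d) (by simp [hones, hl])
        (by simpa [hones] using hd),
      cylinderProb_of_head?_of_getLast? (a := a) (d := n) (by simp [hones, hl])
        (by simp [hones])]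
    simp only [hones, Bool.false_eq_true, ↓reduceIte, List.append_nil,
      gaps_append_singleton hd, List.map_append, List.prod_append, List.map_singleton,
      List.prod_singleton, Nat.add_sub_cancel, Nat.sub_self, h0]
    rw [show n - d = n - 1 - d + 1 by omega, survival_succ]
    ring

theorem cylinderProb_eq_add_cons (hp : p 0 = 0) (n : ℕ) (s : ℕ → Bool) :
    cylinderProb p n s =
      cylinderProb p (n + 1) (cons false s) + cylinderProb p (n + 1) (cons true s) := by
  have h0 := survival_zero hp
  cases hl : ones n s with
  | nil =>
    rw [cylinderProb_of_ones_eq_nil hl, cylinderProb_of_ones_eq_nil (by simp [ones_cons, hl]),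
      cylinderProb_of_head?_of_getLast? (a := 0) (d := 0) (by simp [ones_cons, hl])
        (by simp [ones_cons, hl])]
    simp only [sum_range_succ, h0, mul_one, ones_cons, ↓reduceIte, hl, List.map_nil,
      List.append_nil, gaps_singleton, List.prod_nil, add_tsub_cancel_right, tsub_zero]
    ring
  | cons a l =>
    set d := (a :: l).getLast (List.cons_ne_nil a l)
    have hd : (ones n s).getLast? = some d := by rw [hl, List.getLast?_eq_some_getLast]
    have hdn : d < n := (getLast?_ones_eq_some.1 hd).1
    rw [cylinderProb_of_head?_of_getLast? (by rw [hl]; rfl) hd,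
      cylinderProb_of_head?_of_getLast? (a := a + 1) (d := d + 1) (by simp [ones_cons, hl])
        (by simp [ones_cons, List.getLast?_map, hd]),
      cylinderProb_of_head?_of_getLast? (a := 0) (d := d + 1) (by simp [ones_cons, hl])
        (by simp [ones_cons, List.getLast?_cons, List.getLast?_map, hd])]
    have hgaps_false : gaps (ones (n + 1) (cons false s)) = gaps (ones n s) := by
      simp [ones_cons]
    have hgaps_true : gaps (ones (n + 1) (cons true s)) = (a + 1) :: gaps (ones n s) := by
      rw [ones_cons, hl]
      exact congrArg ((a + 1) :: ·) (gaps_map_succ (a :: l))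
    rw [hgaps_false, hgaps_true, List.map_cons, List.prod_cons, h0,
      show n + 1 - 1 - (d + 1) = n - 1 - d by omega, survival_succ]
    ring

end CylinderProb

theorem cylinderProb_first_one (hp : p 0 = 0) (a : ℕ) :
    cylinderProb p (a + 1) (fun i => decide (i = a)) = rate p * survival p a := by
  have h : ones (a + 1) (fun i => decide (i = a)) = [a] := by
    simp [ones_succ, ones_eq_nil.2 fun i hi => decide_eq_false (Nat.ne_of_lt hi)]
  rw [cylinderProb_of_head?_of_getLast? (a := a) (d := a) (by simp [h]) (by simp [h]), h]
  simp [survival_zero hp]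

theorem cylinderProb_last_one (hp : p 0 = 0) (m : ℕ) :
    cylinderProb p (m + 1) (fun i => decide (i = 0)) = rate p * survival p m := by
  have h := ones_succ_decide_eq_zero m
  rw [cylinderProb_of_head?_of_getLast? (a := 0) (d := 0) (by rw [h]; rfl) (by rw [h]; rfl), h]
  simp [survival_zero hp]

theorem cylinderProb_gap (hp : p 0 = 0) {j : ℕ} (hj : 0 < j) :
    cylinderProb p (j + 1) (fun i => decide (i = 0 ∨ i = j)) = rate p * p j := by
  have h : ones (j + 1) (fun i => decide (i = 0 ∨ i = j)) = [0, j] := by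
    obtain ⟨k, rfl⟩ := Nat.exists_eq_add_of_lt hj
    rw [ones_succ, ones_congr (s' := fun i => decide (i = 0))
      fun i hi => decide_eq_decide.2 (by omega), ones_succ_decide_eq_zero]
    simp
  rw [cylinderProb_of_head?_of_getLast? (a := 0) (d := j) (by rw [h]; rfl) (by rw [h]; rfl), h]
  simp [survival_zero hp]

theorem negMulLog_cylinderProb (n : ℕ) (s : ℕ → Bool) :
    negMulLog (cylinderProb p n s) =
      (if ones n s = [] then negMulLog (cylinderProb p n s) else 0) +
      ∑ a ∈ range n, (if (ones n s).head? = some a then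
        cylinderProb p n s * -(log (rate p) + log (survival p a)) else 0) +
      ∑ u ∈ range n, ∑ t ∈ range u,
        (if IsGap s t u then cylinderProb p n s * -log (p (u - t)) else 0) +
      ∑ d ∈ range n, (if (ones n s).getLast? = some d then
        cylinderProb p n s * -log (survival p (n - 1 - d)) else 0) := by
  have hgaps : ∑ u ∈ range n, ∑ t ∈ range u,
      (if IsGap s t u then cylinderProb p n s * -log (p (u - t)) else 0) =
        -(cylinderProb p n s * ((gaps (ones n s)).map fun g => log (p g)).sum) := by
    simp only [sum_map_gaps_ones, mul_sum, ← sum_neg_distrib, mul_ite, mul_zero, neg_ite,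
      neg_zero, mul_neg]
  rw [hgaps]
  by_cases hl : ones n s = []
  · simp [hl]
  obtain ⟨a, l, hal⟩ := List.exists_cons_of_ne_nil hl
  have ha : (ones n s).head? = some a := by rw [hal]; rfl
  have hd : (ones n s).getLast? = some ((ones n s).getLast hl) := List.getLast?_eq_some_getLast hl
  have han : a < n := (head?_ones_eq_some.1 ha).1
  have hdn := (getLast?_ones_eq_some.1 hd).1
  have hw := cylinderProb_of_head?_of_getLast? (p := p) ha hd
  rw [ha, hd, if_neg hl]
  simp only [Option.some.injEq, sum_ite_eq, mem_range, han, hdn, if_true, zero_add]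
  by_cases hw0 : cylinderProb p n s = 0
  · simp [hw0]
  rw [hw] at hw0 ⊢
  simp only [mul_ne_zero_iff] at hw0
  obtain ⟨⟨⟨hrate, hfirst⟩, hprod⟩, hlast⟩ := hw0
  have hlogprod := log_list_prod fun x hx => ne_of_mem_of_not_mem hx fun h0 =>
    hprod (List.prod_eq_zero h0)
  rw [negMulLog, log_mul (by positivity) hlast, log_mul (by positivity) hprod,
    log_mul hrate hfirst, hlogprod, List.map_map]
  simp only [Function.comp_def]
  ring

def cylinder (n : ℕ) (s : ℕ → Bool) : Set (ℕ → Bool) := {ω | ∀ i < n, ω i = s i}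

def renewalEvent (m : ℕ) (j : ℕ → ℕ) : Set (ℕ → Bool) :=
  {ω | ∀ t ≤ ∑ i ∈ range m, j i, (ω t = true ↔ ∃ i ≤ m, t = ∑ i' ∈ range i, j i')}

section Cylinder

variable {n : ℕ} {s : ℕ → Bool}

theorem measurableSet_cylinder (n : ℕ) (s : ℕ → Bool) : MeasurableSet (cylinder n s) := by
  simp only [cylinder, Set.ofPred_forall]
  exact MeasurableSet.iInter fun i => MeasurableSet.iInter fun _ =>
    measurableSet_eq_fun (measurable_pi_apply i) measurable_const

@[simp] theorem cylinder_zero (s : ℕ → Bool) : cylinder 0 s = Set.univ := by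
  simp [cylinder]

theorem disjoint_cylinder {s' : ℕ → Bool} {i : ℕ} (hi : i < n) (h : s i ≠ s' i) :
    Disjoint (cylinder n s) (cylinder n s') :=
  Set.disjoint_left.2 fun _ hω hω' => h ((hω i hi).symm.trans (hω' i hi))

theorem cylinder_eq_union_update (n : ℕ) (s : ℕ → Bool) :
    cylinder n s =
      cylinder (n + 1) (Function.update s n false) ∪
        cylinder (n + 1) (Function.update s n true) := by
  ext ω
  simp only [cylinder, Set.mem_union, Set.mem_ofPred_eq]
  constructor
  · intro h
    cases hω : ω n
    · left
      intro i hi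
      rcases Nat.lt_succ_iff_lt_or_eq.1 hi with hi | rfl
      · rw [Function.update_of_ne (Nat.ne_of_lt hi), h i hi]
      · simp [hω]
    · right
      intro i hi
      rcases Nat.lt_succ_iff_lt_or_eq.1 hi with hi | rfl
      · rw [Function.update_of_ne (Nat.ne_of_lt hi), h i hi]
      · simp [hω]
  · rintro (h | h) i hi <;>
    simpa [Function.update_of_ne (Nat.ne_of_lt hi)] using h i (by omega)

theorem preimage_shift_cylinder (n : ℕ) (s : ℕ → Bool) :
    (fun ω i => ω (i + 1)) ⁻¹' cylinder n s =
      cylinder (n + 1) (cons false s) ∪ cylinder (n + 1) (cons true s) := by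
  ext ω
  simp only [cylinder, Set.mem_preimage, Set.mem_union, Set.mem_ofPred_eq]
  constructor
  · intro h
    cases hω : ω 0
    · left; rintro (_ | i) hi
      exacts [hω, h i (by omega)]
    · right; rintro (_ | i) hi
      exacts [hω, h i (by omega)]
  · rintro (h | h) i hi <;> exact h (i + 1) (by omega)

theorem cylinder_ofFin (s : Fin n → Bool) :
    cylinder n (ofFin s) = {ω | ∀ i : Fin n, ω i = s i} := by
  ext ω
  simp only [cylinder, ofFin, Set.mem_ofPred, Fin.forall_iff]
  exact forall₂_congr fun i hi => by rw [dif_pos hi]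

theorem head?_ones_of_anchored (hs0 : s 0 = true) : (ones (n + 1) s).head? = some 0 :=
  head?_ones_eq_some.2 ⟨n.succ_pos, hs0, fun _ h => absurd h (Nat.not_lt_zero _)⟩

theorem getLast?_ones_of_anchored (hsn : s n = true) : (ones (n + 1) s).getLast? = some n :=
  getLast?_ones_eq_some.2 ⟨n.lt_succ_self, hsn, fun _ _ _ => by omega⟩

theorem renewalEvent_gaps_ones (hs0 : s 0 = true) (hsn : s n = true) :
    renewalEvent (gaps (ones (n + 1) s)).length (fun i => (gaps (ones (n + 1) s)).getD i 0) =
      cylinder (n + 1) s := by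
  obtain ⟨l, hl⟩ := List.head?_eq_some_iff.1 (head?_ones_of_anchored (n := n) hs0)
  have hlast := getLast?_ones_of_anchored hsn
  have hsorted := ones_pairwise (n + 1) s
  rw [hl] at hsorted hlast ⊢
  set g := gaps (0 :: l)
  have hlen : g.length = l.length := by
    simp only [g, length_gaps, List.length_cons, Nat.add_sub_cancel]
  have hpartial : ∀ i ≤ g.length, ∑ k ∈ range i, g.getD k 0 = (0 :: l).getD i 0 := fun i hi =>
    (zero_add _).symm.trans (add_sum_getD_gaps (hsorted.imp le_of_lt) (hlen ▸ hi))
  have htotal : ∑ k ∈ range g.length, g.getD k 0 = n := by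
    rw [hpartial _ le_rfl, hlen, List.getD_eq_getElem?_getD,
      ← Option.getD_some (a := n) (b := 0), ← hlast, List.getLast?_eq_getElem?]
    rfl
  have hmem : ∀ t, (∃ i ≤ g.length, t = ∑ k ∈ range i, g.getD k 0) ↔ t ∈ ones (n + 1) s := by
    intro t
    rw [hl, List.mem_iff_getElem]
    constructor
    · rintro ⟨i, hi, rfl⟩
      have hi' : i < (0 :: l).length := by rw [List.length_cons]; omega
      exact ⟨i, hi', by rw [hpartial i hi, List.getD_eq_getElem _ _ hi']⟩
    · rintro ⟨i, hi, rfl⟩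
      rw [List.length_cons] at hi
      exact ⟨i, by omega, by rw [hpartial i (by omega), List.getD_eq_getElem]⟩
  ext ω
  simp only [renewalEvent, htotal, hmem, mem_ones, Set.mem_ofPred_eq, cylinder]
  refine ⟨fun h t ht => ?_, fun h t ht => ?_⟩
  · rw [Bool.eq_iff_iff, h t (by omega), and_iff_right ht]
  · rw [h t (by omega), and_iff_right (Nat.lt_succ_of_le ht)]

end Cylinder

section Stationarity

variable {α : Type*} [MeasurableSpace α] {μ : Measure (ℕ → α)}

theorem measurePreserving_shift_add (hstat : μ.map (fun ω n => ω (n + 1)) = μ) (t : ℕ) :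
    MeasurePreserving (fun ω i => ω (i + t)) μ μ := by
  have hshift : MeasurePreserving (fun (ω : ℕ → α) n => ω (n + 1)) μ μ :=
    ⟨measurable_pi_lambda _ fun n => measurable_pi_apply (n + 1), hstat⟩
  convert hshift.iterate t using 1
  funext ω
  induction t generalizing ω with
  | zero => rfl
  | succ t ih => rw [Function.iterate_succ_apply, ← ih]; simp [add_assoc]

end Stationarity

/-- The renewal structure: a `1` at time `0` followed by the gaps `j 0, …, j (m - 1)` has
probability `λ ∏ i, p (j i)`. -/
def HasRenewalCylinders (μ : Measure (ℕ → Bool)) (p : ℕ → ℝ) : Prop :=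
  ∀ (m : ℕ) (j : ℕ → ℕ), (∀ i < m, 1 ≤ j i) →
    μ (renewalEvent m j) = ENNReal.ofReal (rate p * ∏ i ∈ range m, p (j i))

section Measure

variable {μ : Measure (ℕ → Bool)} {n : ℕ} {s : ℕ → Bool}

theorem measureReal_cylinder_of_anchored (hp0 : ∀ j, 0 ≤ p j) (hp : p 0 = 0)
    (hRen : HasRenewalCylinders μ p) (hs0 : s 0 = true) (hsn : s n = true) :
    μ.real (cylinder (n + 1) s) = cylinderProb p (n + 1) s := by
  set g := gaps (ones (n + 1) s)
  have hgaps_pos : ∀ i < g.length, 1 ≤ g.getD i 0 := fun i hi => by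
    rw [List.getD_eq_getElem _ _ hi]
    exact pos_of_mem_gaps (ones_pairwise (n + 1) s) (List.getElem_mem hi)
  have hprod : ∏ i ∈ range g.length, p (g.getD i 0) = (g.map p).prod := by
    rw [prod_range, ← Fin.prod_univ_fun_getElem]
    exact prod_congr rfl fun i _ => by rw [List.getD_eq_getElem]
  rw [measureReal_def, ← renewalEvent_gaps_ones hs0 hsn, hRen _ _ hgaps_pos, hprod,
    ENNReal.toReal_ofReal (mul_nonneg (rate_nonneg hp0) (List.prod_nonneg (by simp [hp0]))),
    cylinderProb_of_head?_of_getLast? (head?_ones_of_anchored hs0)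
      (getLast?_ones_of_anchored hsn), Nat.add_sub_cancel, Nat.sub_self, survival_zero hp,
    mul_one, mul_one]

theorem measureReal_cylinder_succ_of_last [IsFiniteMeasure μ] (hp0 : ∀ j, 0 ≤ p j)
    (hp : p 0 = 0) (hstat : μ.map (fun ω n => ω (n + 1)) = μ) (hRen : HasRenewalCylinders μ p)
    (ih : ∀ s, μ.real (cylinder n s) = cylinderProb p n s) (hsn : s n = true) :
    μ.real (cylinder (n + 1) s) = cylinderProb p (n + 1) s := by
  cases hs0 : s 0
  case true => exact measureReal_cylinder_of_anchored hp0 hp hRen hs0 hsn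
  case false =>
    obtain ⟨k, rfl⟩ : ∃ k, n = k + 1 :=
      Nat.exists_eq_add_one.2 (Nat.pos_of_ne_zero fun h => by simp [h, hs0] at hsn)
    set s' : ℕ → Bool := fun i => s (i + 1)
    have hs : s = cons false s' := funext fun i => by cases i <;> simp [s', hs0]
    have hsplit := measureReal_union (μ := μ) (disjoint_cylinder (Nat.succ_pos (k + 1))
      (show cons false s' 0 ≠ cons true s' 0 by simp)) (measurableSet_cylinder _ _)
    rw [← preimage_shift_cylinder, (measurePreserving_shift_add hstat 1).measureReal_preimage
      (measurableSet_cylinder _ _).nullMeasurableSet, ih,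
      measureReal_cylinder_of_anchored hp0 hp hRen (cons_zero _ _) (by simpa [hs] using hsn),
      cylinderProb_eq_add_cons hp] at hsplit
    rw [hs]
    linarith

theorem measureReal_cylinder [IsProbabilityMeasure μ] (hp0 : ∀ j, 0 ≤ p j) (hp : p 0 = 0)
    (hstat : μ.map (fun ω n => ω (n + 1)) = μ) (hRen : HasRenewalCylinders μ p)
    (n : ℕ) (s : ℕ → Bool) : μ.real (cylinder n s) = cylinderProb p n s := by
  induction n generalizing s with
  | zero => simp
  | succ n ih =>
    cases hsn : s n
    case true => exact measureReal_cylinder_succ_of_last hp0 hp hstat hRen ih hsn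
    case false =>
      have hsplit := measureReal_union (μ := μ) (disjoint_cylinder (Nat.lt_succ_self n)
        (show Function.update s n false n ≠ Function.update s n true n by simp))
        (measurableSet_cylinder _ _)
      rw [← cylinder_eq_union_update, ih, measureReal_cylinder_succ_of_last hp0 hp hstat hRen ih
        (Function.update_self _ _ _), cylinderProb_eq_add_update hp,
        ← hsn, Function.update_eq_self] at hsplit
      linarith

end Measure

section Entropy

variable {μ : Measure (ℕ → Bool)} {n : ℕ}

theorem sum_measureReal_cylinder_filter [IsFiniteMeasure μ]
    (hstat : μ.map (fun ω n => ω (n + 1)) = μ) {t m : ℕ} (h : t + m ≤ n) (q : ℕ → Bool) :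
    ∑ s : Fin n → Bool with ∀ i < m, ofFin s (t + i) = q i, μ.real (cylinder n (ofFin s)) =
      μ.real (cylinder m q) := by
  have hpre : (fun (ω : ℕ → Bool) (i : Fin n) => ω i) ⁻¹'
      ↑({s : Fin n → Bool | ∀ i < m, ofFin s (t + i) = q i} : Finset (Fin n → Bool)) =
      (fun (ω : ℕ → Bool) i => ω (i + t)) ⁻¹' cylinder m q := by
    ext ω
    rw [Set.mem_preimage, mem_coe, mem_filter_univ]
    simp only [cylinder, ofFin, Set.mem_preimage, Set.mem_ofPred]
    exact forall₂_congr fun i hi => by rw [dif_pos (by omega), add_comm]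
  have hfiber : ∀ s : Fin n → Bool,
      cylinder n (ofFin s) = (fun (ω : ℕ → Bool) (i : Fin n) => ω i) ⁻¹' {s} := fun s => by
    rw [cylinder_ofFin]; ext ω; simp [funext_iff]
  simp_rw [hfiber]
  rw [sum_measureReal_preimage_singleton _ fun s _ =>
      measurableSet_preimage (by fun_prop) (measurableSet_singleton s), hpre,
    (measurePreserving_shift_add hstat t).measureReal_preimage
      (measurableSet_cylinder m q).nullMeasurableSet]

variable [IsProbabilityMeasure μ]

theorem sum_ite_cylinderProb_mul (hp0 : ∀ j, 0 ≤ p j) (hp : p 0 = 0)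
    (hstat : μ.map (fun ω n => ω (n + 1)) = μ) (hRen : HasRenewalCylinders μ p)
    {P : (Fin n → Bool) → Prop} [DecidablePred P] {t m : ℕ} (h : t + m ≤ n) {q : ℕ → Bool}
    (hP : ∀ s, P s ↔ ∀ i < m, ofFin s (t + i) = q i) (c : ℝ) :
    ∑ s, (if P s then cylinderProb p n (ofFin s) * c else 0) = cylinderProb p m q * c := by
  rw [← sum_filter, ← sum_mul, filter_congr fun s _ => hP s]
  simp_rw [← measureReal_cylinder hp0 hp hstat hRen]
  rw [sum_measureReal_cylinder_filter hstat h]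

theorem sum_sum_ite_head?_ones (hp0 : ∀ j, 0 ≤ p j) (hp : p 0 = 0)
    (hstat : μ.map (fun ω n => ω (n + 1)) = μ) (hRen : HasRenewalCylinders μ p) (F : ℕ → ℝ) :
    ∑ s : Fin n → Bool, ∑ a ∈ range n, (if (ones n (ofFin s)).head? = some a then
      cylinderProb p n (ofFin s) * F a else 0) = ∑ a ∈ range n, rate p * survival p a * F a := by
  rw [sum_comm]
  refine sum_congr rfl fun a ha => ?_
  rw [sum_ite_cylinderProb_mul hp0 hp hstat hRen (by simpa using ha)
    fun s => head?_ones_eq_some_iff (mem_range.1 ha), cylinderProb_first_one hp]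

theorem sum_sum_ite_getLast?_ones (hp0 : ∀ j, 0 ≤ p j) (hp : p 0 = 0)
    (hstat : μ.map (fun ω n => ω (n + 1)) = μ) (hRen : HasRenewalCylinders μ p) (F : ℕ → ℝ) :
    ∑ s : Fin n → Bool, ∑ d ∈ range n, (if (ones n (ofFin s)).getLast? = some d then
      cylinderProb p n (ofFin s) * F d else 0) =
        ∑ d ∈ range n, rate p * survival p (n - 1 - d) * F d := by
  rw [sum_comm]
  refine sum_congr rfl fun d hd => ?_
  have hdn := mem_range.1 hd
  rw [sum_ite_cylinderProb_mul hp0 hp hstat hRen (m := n - d) (by omega)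
    fun s => getLast?_ones_eq_some_iff hdn, show n - d = n - 1 - d + 1 by omega,
    cylinderProb_last_one hp]

theorem sum_sum_ite_isGap (hp0 : ∀ j, 0 ≤ p j) (hp : p 0 = 0)
    (hstat : μ.map (fun ω n => ω (n + 1)) = μ) (hRen : HasRenewalCylinders μ p) (F : ℕ → ℝ) :
    ∑ s : Fin n → Bool, ∑ u ∈ range n, ∑ t ∈ range u, (if IsGap (ofFin s) t u then
      cylinderProb p n (ofFin s) * F (u - t) else 0) =
        ∑ u ∈ range n, ∑ t ∈ range u, rate p * p (u - t) * F (u - t) := by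
  rw [sum_comm]
  refine sum_congr rfl fun u hu => ?_
  rw [sum_comm]
  refine sum_congr rfl fun t ht => ?_
  have htu := mem_range.1 ht
  rw [sum_ite_cylinderProb_mul hp0 hp hstat hRen (by rw [mem_range] at hu; omega)
    fun s => isGap_iff htu,
    cylinderProb_gap hp (by omega)]

theorem blockEntropyB_mul_log_two (hp0 : ∀ j, 0 ≤ p j) (hp : p 0 = 0)
    (hstat : μ.map (fun ω n => ω (n + 1)) = μ) (hRen : HasRenewalCylinders μ p) (n : ℕ) :
    blockEntropyB μ n * log 2 =
      negMulLog (1 - rate p * ∑ b ∈ range n, survival p b) +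
      ∑ m ∈ range n, rate p * (survival p m * -log (rate p) + 2 * negMulLog (survival p m) +
        ∑ t ∈ range m, negMulLog (p (m - t))) := by
  have hw : ∀ s : Fin n → Bool,
      (μ {ω | ∀ i : Fin n, ω i = s i}).toReal = cylinderProb p n (ofFin s) := fun s => by
    rw [← cylinder_ofFin, ← measureReal_def, measureReal_cylinder hp0 hp hstat hRen]
  have hlog : ∀ x : ℝ, -(x * logb 2 x * log 2) = negMulLog x := fun x => by
    rw [logb, negMulLog]; field_simp
  have hrefl := sum_range_reflect (fun d => rate p * survival p d * -log (survival p d)) n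
  rw [blockEntropyB, neg_mul, sum_mul, ← sum_neg_distrib]
  simp only [hw, hlog]
  rw [sum_congr rfl fun s _ => negMulLog_cylinderProb n (ofFin s)]
  simp only [sum_add_distrib, ones_ofFin_eq_nil, sum_ite_eq', mem_univ, if_true]
  rw [sum_sum_ite_head?_ones hp0 hp hstat hRen,
    sum_sum_ite_isGap hp0 hp hstat hRen fun j => -log (p j),
    sum_sum_ite_getLast?_ones hp0 hp hstat hRen, hrefl,
    cylinderProb_of_ones_eq_nil (ones_ofFin_eq_nil.2 rfl)]
  simp only [add_assoc, ← sum_add_distrib]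
  congr 1
  refine sum_congr rfl fun m _ => ?_
  have hgap : ∑ t ∈ range m, rate p * p (m - t) * -log (p (m - t)) =
      rate p * ∑ t ∈ range m, negMulLog (p (m - t)) := by
    rw [mul_sum]; exact sum_congr rfl fun _ _ => by rw [negMulLog]; ring
  rw [hgap, negMulLog]
  ring

theorem tendsto_blockEntropyB_div (hp0 : ∀ j, 0 ≤ p j) (hp : p 0 = 0) (hsum : HasSum p 1)
    (hmean : Summable fun j : ℕ => (j : ℝ) * p j) (hstat : μ.map (fun ω n => ω (n + 1)) = μ)
    (hRen : HasRenewalCylinders μ p) :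
    Tendsto (fun n : ℕ => blockEntropyB μ n / n) atTop
      (𝓝 (rate p * (∑' j, negMulLog (p j)) / log 2)) := by
  have hentropy := summable_negMulLog_of_summable_mul hp0
    (fun j => le_hasSum hsum j fun i _ => hp0 i) hmean
  have hbound : ∀ n, |negMulLog (1 - rate p * ∑ b ∈ range n, survival p b)| ≤ 1 := fun n => by
    rw [← cylinderProb_of_ones_eq_nil (ones_eq_nil.2 fun _ _ => rfl),
      ← measureReal_cylinder hp0 hp hstat hRen n fun _ => false]
    have h0 := measureReal_nonneg (μ := μ) (s := cylinder n fun _ => false)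
    rw [abs_of_nonneg (negMulLog_nonneg h0 measureReal_le_one)]
    linarith [negMulLog_le_one_sub_self h0]
  have hsurvival := tendsto_survival hsum
  have hu := ((hsurvival.mul_const (-log (rate p))).add
    (((continuous_negMulLog.tendsto 0).comp hsurvival).const_mul 2)).add
    (tendsto_sum_range_sub hentropy (by simp [hp]))
  simp only [zero_mul, Function.comp_def, negMulLog_zero, mul_zero, zero_add] at hu
  have := (tendsto_div_of_eq_add_sum hbound (hu.const_mul (rate p))
    (blockEntropyB_mul_log_two hp0 hp hstat hRen)).div_const (log 2)
  refine this.congr fun n => ?_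
  field_simp

end Entropy

end BinaryRenewal

/-- Entropy rate of a stationary binary renewal process: if the interarrival times are
i.i.d. with distribution `P = (p_j)` of finite mean, then the entropy rate of the binary
process equals `λ H(P)`, where `λ = 1/E(Y_1)` and `H(P) = −Σ_j p_j log p_j`.
The renewal structure is encoded by the cylinder-probability identity `hRen`:
the probability of a `1` at time `0` followed by `1`s exactly at the partial sums of the
gaps `j_1, …, j_m` (up to time `j_1 + ⋯ + j_m`) is `λ ∏_i p_{j_i}`. -/
theorem stmt_9 (p : ℕ → ℝ) (hp0 : ∀ j, 0 ≤ p j) (hp00 : p 0 = 0)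
    (hpsum : Summable p) (hp1 : ∑' j, p j = 1)
    (hmean : Summable fun j : ℕ => (j : ℝ) * p j)
    (μ : Measure (ℕ → Bool)) [IsProbabilityMeasure μ]
    (hstat : μ.map (fun ω n => ω (n + 1)) = μ)
    (hRen : ∀ (m : ℕ) (j : ℕ → ℕ), (∀ i < m, 1 ≤ j i) →
      μ {ω | ∀ t ≤ ∑ i ∈ Finset.range m, j i,
          (ω t = true ↔ ∃ i ≤ m, t = ∑ i' ∈ Finset.range i, j i')} =
        ENNReal.ofReal ((∑' j' : ℕ, (j' : ℝ) * p j')⁻¹ * ∏ i ∈ Finset.range m, p (j i))) :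
    Tendsto (fun n : ℕ => blockEntropyB μ n / n) atTop
      (𝓝 ((∑' j' : ℕ, (j' : ℝ) * p j')⁻¹ * (-∑' j', p j' * Real.logb 2 (p j')))) := by
  convert BinaryRenewal.tendsto_blockEntropyB_div hp0 hp00 (hp1 ▸ hpsum.hasSum) hmean hstat hRen
    using 2
  rw [mul_div_assoc, ← tsum_div_const, ← tsum_neg]
  refine congrArg _ (tsum_congr fun j => ?_)
  rw [Real.negMulLog, Real.logb]
  ring
end
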